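/- Let p > 1 and consider L with θ = p, i.e. L(s) = s⁴ − 16p²s² + 32p²s − 16p². Then L(s) = (s² + 4ps − 4p)(s² − 4ps + 4p) for all real s, L(2p + 2√(p² − p)) = 0, and every real root s of L satisfies s ≤ 2p + 2√(p² − p); that is, 2p + 2√(p² − p) (which equals 2t₀ for θ = p) is the largest real root of L. -/
import Mathlib


noncomputable section

/-- The quartic polynomial `L`. -/
def Lpoly (p θ s : ℝ) : ℝ :=
  s ^ 4 - (16 * p * θ * (p + 1) / (θ + 1)) * s ^ 2
    + (16 * p * θ * (p + 1) * (p + θ + 2) / (θ + 1) ^ 2) * s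
    - 16 * p * θ * (p + 1) ^ 2 / (θ + 1) ^ 2

/-- for `θ = p`, `L` factorizes and `2p + 2√(p²−p)` is its largest real root. -/
theorem stmt8 (p : ℝ) (hp : 1 < p) :
    (∀ s : ℝ, Lpoly p p s = s ^ 4 - 16 * p ^ 2 * s ^ 2 + 32 * p ^ 2 * s - 16 * p ^ 2) ∧
    (∀ s : ℝ, Lpoly p p s = (s ^ 2 + 4 * p * s - 4 * p) * (s ^ 2 - 4 * p * s + 4 * p)) ∧
    Lpoly p p (2 * p + 2 * Real.sqrt (p ^ 2 - p)) = 0 ∧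
    ∀ s : ℝ, Lpoly p p s = 0 → s ≤ 2 * p + 2 * Real.sqrt (p ^ 2 - p) := by
  have hp0 : (0:ℝ) < p := lt_trans one_pos hp
  have hp1 : p + 1 ≠ 0 := by positivity
  have h1 : ∀ s : ℝ, Lpoly p p s = s ^ 4 - 16 * p ^ 2 * s ^ 2 + 32 * p ^ 2 * s - 16 * p ^ 2 := by
    intro s; unfold Lpoly; field_simp; ring
  have hfac : ∀ s : ℝ, Lpoly p p s
      = (s ^ 2 + 4 * p * s - 4 * p) * (s ^ 2 - 4 * p * s + 4 * p) := by
    intro s; rw [h1]; ring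
  have hpm : 0 ≤ p ^ 2 - p := by nlinarith
  have hs : Real.sqrt (p ^ 2 - p) ^ 2 = p ^ 2 - p := Real.sq_sqrt hpm
  refine ⟨h1, hfac, ?_, ?_⟩
  · rw [hfac]; nlinarith [hs]
  · intro s h
    rw [hfac] at h
    rcases mul_eq_zero.1 h with h | h
    · have h2 : (s + 2 * p) ^ 2 = 4 * (p ^ 2 + p) := by nlinarith
      have hb : s + 2 * p ≤ Real.sqrt (4 * (p ^ 2 + p)) := by
        calc s + 2 * p ≤ |s + 2 * p| := le_abs_self _
        _ = Real.sqrt ((s + 2 * p) ^ 2) := (Real.sqrt_sq_eq_abs _).symm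
        _ = _ := by rw [h2]
      have hle : Real.sqrt (4 * (p ^ 2 + p)) ≤ 4 * p := by
        rw [show (4:ℝ) * p = Real.sqrt ((4 * p) ^ 2) from (Real.sqrt_sq (by positivity)).symm]
        apply Real.sqrt_le_sqrt; nlinarith
      have := Real.sqrt_nonneg (p ^ 2 - p)
      linarith
    · have h2 : (s - 2 * p) ^ 2 = 4 * (p ^ 2 - p) := by nlinarith
      have hb : s - 2 * p ≤ Real.sqrt (4 * (p ^ 2 - p)) := by
        calc s - 2 * p ≤ |s - 2 * p| := le_abs_self _
        _ = Real.sqrt ((s - 2 * p) ^ 2) := (Real.sqrt_sq_eq_abs _).symm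
        _ = _ := by rw [h2]
      have heq : Real.sqrt (4 * (p ^ 2 - p)) = 2 * Real.sqrt (p ^ 2 - p) := by
        rw [show (4:ℝ) * (p ^ 2 - p) = (2:ℝ) ^ 2 * (p ^ 2 - p) by ring,
          Real.sqrt_mul (by positivity), Real.sqrt_sq two_pos.le]
      linarith
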